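/- Let B be a finite skew left brace and N an ideal of B. Then Pb(B) ≤ Pb(N) · Pb(B/N). In particular Pb(B) ≤ Pb(B/N) and Pb(B) ≤ Pb(N). -/

import Mathlib

/-- A skew left brace structure on a type carrying both an additive and a
multiplicative group structure: the compatibility (skew left distributivity)
`a ∘ (b + c) = (a ∘ b) - a + (a ∘ c)` holds, and the two identities coincide. -/
class SkewBrace (B : Type*) [AddGroup B] [Group B] : Prop where
  compat : ∀ a b c : B, a * (b + c) = a * b + -a + a * c
  zero_eq_one : (0 : B) = 1

section Defs

variable {B : Type*} [AddGroup B] [Group B]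

/-- `λ_a(b) = -a + (a ∘ b)`. -/
def lambdaMap (a b : B) : B := -a + a * b

/-- `a * b := -a + (a ∘ b) - b` (the star product of a skew brace). -/
def starOp (a b : B) : B := -a + a * b + -b

/-- The additive commutator `[a,b]⁺ = a + b - a - b`. -/
def addComB (a b : B) : B := a + b + -a + -b

/-- The multiplicative commutator `[a,b]∘ = a ∘ b ∘ a⁻¹ ∘ b⁻¹`. -/
def mulComB (a b : B) : B := a * b * a⁻¹ * b⁻¹

/-- The brace centralizer `Cb_B(x) = {b | x*b = b*x = [x,b]⁺ = 1}`. -/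
def Cb (x : B) : Set B := {b | starOp x b = 0 ∧ starOp b x = 0 ∧ addComB x b = 0}

/-- The annihilator `Ann(B) = Ker λ ∩ Z(B,+) ∩ Z(B,∘)` as a set. -/
def AnnSet (B : Type*) [AddGroup B] [Group B] : Set B :=
  {a | (∀ b : B, a + b = a * b) ∧ (∀ b : B, a + b = b + a) ∧ (∀ b : B, a * b = b * a)}

/-- A sub-skew brace: a subset closed under both group operations and inverses. -/
def IsSubSkewBrace (H : Set B) : Prop :=
  (0 : B) ∈ H ∧ (∀ a ∈ H, ∀ b ∈ H, a + b ∈ H) ∧ (∀ a ∈ H, -a ∈ H) ∧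
    (∀ a ∈ H, ∀ b ∈ H, a * b ∈ H) ∧ (∀ a ∈ H, a⁻¹ ∈ H)

/-- The commuting probability of a (finite) skew brace. -/
noncomputable def Pb (B : Type*) [AddGroup B] [Group B] : ℚ :=
  (Nat.card {p : B × B //
      starOp p.1 p.2 = 0 ∧ starOp p.2 p.1 = 0 ∧ addComB p.1 p.2 = 0} : ℚ)
    / (Nat.card B : ℚ) ^ 2

/-- The commuting probability of a sub-skew brace `H` of `B`. -/
noncomputable def PbSub (H : Set B) : ℚ :=
  (Nat.card {p : B × B // p.1 ∈ H ∧ p.2 ∈ H ∧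
      starOp p.1 p.2 = 0 ∧ starOp p.2 p.1 = 0 ∧ addComB p.1 p.2 = 0} : ℚ)
    / (Nat.card H : ℚ) ^ 2

end Defs

/-- An ideal of a skew brace: a sub-skew brace, λ-invariant, normal in both
group structures. -/
def IsIdeal {B : Type*} [AddGroup B] [Group B] (N : Set B) : Prop :=
  IsSubSkewBrace N ∧ (∀ a : B, ∀ x ∈ N, lambdaMap a x ∈ N) ∧
    (∀ a : B, ∀ x ∈ N, a + x + -a ∈ N) ∧ (∀ a : B, ∀ x ∈ N, a * x * a⁻¹ ∈ N)

/-- The commuting probability of the quotient skew brace `B/N`: a pair of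
cosets commutes iff the corresponding star products and additive commutator
land in `N`, and `|B/N|² = |B|²/|N|²`. -/
noncomputable def PbQuot (B : Type*) [AddGroup B] [Group B] (N : Set B) : ℚ :=
  (Nat.card {p : B × B //
      starOp p.1 p.2 ∈ N ∧ starOp p.2 p.1 ∈ N ∧ addComB p.1 p.2 ∈ N} : ℚ)
    / (Nat.card B : ℚ) ^ 2


section Lemmas

variable {B : Type*} [AddGroup B] [Group B] [SkewBrace B]

lemma zeq : (0 : B) = 1 := SkewBrace.zero_eq_one

lemma mul_eq_add_lam (a b : B) : a * b = a + lambdaMap a b := by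
  simp [lambdaMap]

lemma lam_add (a b c : B) : lambdaMap a (b + c) = lambdaMap a b + lambdaMap a c := by
  simp only [lambdaMap, SkewBrace.compat a b c]
  simp [add_assoc]

lemma lam_zero (a : B) : lambdaMap a (0 : B) = 0 := by
  rw [lambdaMap, zeq, mul_one, neg_add_cancel]
  exact zeq

lemma lam_neg (a b : B) : lambdaMap a (-b) = -(lambdaMap a b) := by
  have h := lam_add a b (-b)
  rw [add_neg_cancel, lam_zero] at h
  exact (neg_eq_of_add_eq_zero_right h.symm).symm

lemma lam_mul (a b c : B) : lambdaMap (a * b) c = lambdaMap a (lambdaMap b c) := by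
  have h1 : a * (-b) = a + (-(a * b) + a) := by
    have := mul_eq_add_lam a (-b)
    rw [lam_neg, lambdaMap, neg_add_rev, neg_neg] at this
    simpa [add_assoc] using this
  calc lambdaMap (a * b) c = -(a * b) + a * (b * c) := by
        rw [lambdaMap, mul_assoc]
    _ = lambdaMap a (lambdaMap b c) := by
        rw [lambdaMap, lambdaMap, SkewBrace.compat, h1]
        simp [add_assoc]

lemma lam_one (a : B) : lambdaMap a (1 : B) = 0 := by
  rw [← zeq, lam_zero]

lemma lam_id (c : B) : lambdaMap (1 : B) c = c := by
  rw [lambdaMap, one_mul, ← zeq, neg_zero, zero_add]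

lemma lam_inv_lam (a c : B) : lambdaMap a⁻¹ (lambdaMap a c) = c := by
  rw [← lam_mul, inv_mul_cancel, lam_id]

lemma lam_lam_inv (a c : B) : lambdaMap a (lambdaMap a⁻¹ c) = c := by
  rw [← lam_mul, mul_inv_cancel, lam_id]

end Lemmas
section Lemmas2

variable {B : Type*} [AddGroup B] [Group B] [SkewBrace B]

/-- The commuting predicate. -/
def Eb (x b : B) : Prop := starOp x b = 0 ∧ starOp b x = 0 ∧ addComB x b = 0

lemma star_eq (x b : B) : starOp x b = lambdaMap x b + -b := by
  simp [starOp, lambdaMap, add_assoc]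

lemma star_eq_zero_iff {x b : B} : starOp x b = 0 ↔ lambdaMap x b = b := by
  rw [star_eq, add_neg_eq_zero]

lemma addComB_eq_zero_iff {x b : B} : addComB x b = 0 ↔ x + b = b + x := by
  have : addComB x b = (x + b) + -(b + x) := by simp [addComB, add_assoc]
  rw [this, add_neg_eq_zero]

lemma Eb_iff {x b : B} :
    Eb x b ↔ lambdaMap x b = b ∧ lambdaMap b x = x ∧ x + b = b + x := by
  unfold Eb
  rw [star_eq_zero_iff, star_eq_zero_iff, addComB_eq_zero_iff]

lemma Eb_symm {x b : B} (h : Eb x b) : Eb b x := by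
  rw [Eb_iff] at h ⊢
  exact ⟨h.2.1, h.1, h.2.2.symm⟩

lemma Eb.mul_comm {x b : B} (h : Eb x b) : x * b = b * x := by
  rw [Eb_iff] at h
  rw [mul_eq_add_lam, mul_eq_add_lam, h.1, h.2.1, h.2.2]

lemma Eb.add_comm' {x b : B} (h : Eb x b) : x + b = b + x := (Eb_iff.mp h).2.2

lemma Eb.lam_fix1 {x b : B} (h : Eb x b) : lambdaMap x b = b := (Eb_iff.mp h).1
lemma Eb.lam_fix2 {x b : B} (h : Eb x b) : lambdaMap b x = x := (Eb_iff.mp h).2.1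

lemma Eb_mul {x b c : B} (hb : Eb x b) (hc : Eb x c) : Eb x (b * c) := by
  have hlam : ∀ z : B, lambdaMap x (lambdaMap b z) = lambdaMap b (lambdaMap x z) := by
    intro z
    rw [← lam_mul, ← lam_mul, hb.mul_comm]
  rw [Eb_iff]
  have h1 : lambdaMap x (b * c) = b * c := by
    rw [mul_eq_add_lam b c, lam_add, hb.lam_fix1, hlam, hc.lam_fix1]
  have h2 : lambdaMap (b * c) x = x := by
    rw [lam_mul, hc.lam_fix2, hb.lam_fix2]
  refine ⟨h1, h2, ?_⟩
  have hmul : x * (b * c) = (b * c) * x := by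
    rw [← mul_assoc, hb.mul_comm, mul_assoc, hc.mul_comm, ← mul_assoc]
  rw [mul_eq_add_lam x (b*c), mul_eq_add_lam (b*c) x, h1, h2] at hmul
  exact hmul

lemma Eb_inv {x b : B} (hb : Eb x b) : Eb x b⁻¹ := by
  have hmul : x * b⁻¹ = b⁻¹ * x := (Commute.inv_right hb.mul_comm : Commute x b⁻¹)
  have h2 : lambdaMap b⁻¹ x = x := by
    conv_lhs => rw [← hb.lam_fix2]
    rw [lam_inv_lam]
  have hbinv : b⁻¹ = -(lambdaMap b⁻¹ b) := by
    have := mul_eq_add_lam b⁻¹ b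
    rw [inv_mul_cancel, ← zeq] at this
    exact (neg_eq_of_add_eq_zero_left this.symm).symm
  have h1 : lambdaMap x b⁻¹ = b⁻¹ := by
    rw [hbinv, lam_neg]
    congr 1
    rw [← lam_mul, hmul, lam_mul, hb.lam_fix1]
  have h3 : x + b⁻¹ = b⁻¹ + x := by
    have e1 : x * b⁻¹ = x + b⁻¹ := by rw [mul_eq_add_lam, h1]
    have e2 : b⁻¹ * x = b⁻¹ + x := by rw [mul_eq_add_lam, h2]
    rw [e1, e2] at hmul
    exact hmul
  exact Eb_iff.mpr ⟨h1, h2, h3⟩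

lemma Eb_to_conds {x b : B} (h : Eb x b) :
    starOp x b = 0 ∧ starOp b x = 0 ∧ addComB x b = 0 := h

end Lemmas2
section Lemmas3

variable {B : Type*} [AddGroup B] [Group B] [SkewBrace B] {N : Set B}

/-- The quotient-commuting predicate. -/
def Qb (N : Set B) (x z : B) : Prop :=
  starOp x z ∈ N ∧ starOp z x ∈ N ∧ addComB x z ∈ N

lemma IsIdeal.zero_mem (hN : IsIdeal N) : (0 : B) ∈ N := hN.1.1
lemma IsIdeal.one_mem (hN : IsIdeal N) : (1 : B) ∈ N := by rw [← zeq]; exact hN.1.1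
lemma IsIdeal.add_mem (hN : IsIdeal N) {a b : B} (ha : a ∈ N) (hb : b ∈ N) :
    a + b ∈ N := hN.1.2.1 a ha b hb
lemma IsIdeal.neg_mem (hN : IsIdeal N) {a : B} (ha : a ∈ N) : -a ∈ N :=
  hN.1.2.2.1 a ha
lemma IsIdeal.mul_mem (hN : IsIdeal N) {a b : B} (ha : a ∈ N) (hb : b ∈ N) :
    a * b ∈ N := hN.1.2.2.2.1 a ha b hb
lemma IsIdeal.inv_mem (hN : IsIdeal N) {a : B} (ha : a ∈ N) : a⁻¹ ∈ N :=
  hN.1.2.2.2.2 a ha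
lemma IsIdeal.lam_mem (hN : IsIdeal N) (a : B) {x : B} (hx : x ∈ N) :
    lambdaMap a x ∈ N := hN.2.1 a x hx
lemma IsIdeal.addConj_mem (hN : IsIdeal N) (a : B) {x : B} (hx : x ∈ N) :
    a + x + -a ∈ N := hN.2.2.1 a x hx
lemma IsIdeal.mulConj_mem (hN : IsIdeal N) (a : B) {x : B} (hx : x ∈ N) :
    a * x * a⁻¹ ∈ N := hN.2.2.2 a x hx

lemma star_mem_left (hN : IsIdeal N) (x : B) {n : B} (hn : n ∈ N) :
    starOp n x ∈ N := by
  have hm : x⁻¹ * n * x ∈ N := by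
    have := hN.mulConj_mem x⁻¹ hn
    rwa [inv_inv] at this
  have key : starOp n x = -n + (x + lambdaMap x (x⁻¹ * n * x) + -x) := by
    have hx : n * x = x + lambdaMap x (x⁻¹ * n * x) := by
      rw [← mul_eq_add_lam]; group
    rw [starOp, hx]
    simp [add_assoc]
  rw [key]
  exact hN.add_mem (hN.neg_mem hn) (hN.addConj_mem x (hN.lam_mem x hm))

lemma star_mem_right (hN : IsIdeal N) (x : B) {n : B} (hn : n ∈ N) :
    starOp x n ∈ N := by
  rw [star_eq]
  exact hN.add_mem (hN.lam_mem x hn) (hN.neg_mem hn)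

lemma Qb_star1 (hN : IsIdeal N) {x z n : B} (h : starOp x z ∈ N) (hn : n ∈ N) :
    starOp x (z * n) ∈ N := by
  have key : starOp x (z * n)
      = starOp x z + (z + (lambdaMap (x * z) n + -(lambdaMap z n)) + -z) := by
    rw [star_eq, star_eq, mul_eq_add_lam z n, lam_add, ← lam_mul, neg_add_rev]
    simp [add_assoc]
  rw [key]
  refine hN.add_mem h (hN.addConj_mem z (hN.add_mem (hN.lam_mem _ hn)
    (hN.neg_mem (hN.lam_mem _ hn))))

lemma Qb_star2 (hN : IsIdeal N) {x z n : B} (h : starOp z x ∈ N) (hn : n ∈ N) :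
    starOp (z * n) x ∈ N := by
  set m := z * n * z⁻¹ with hm_def
  have hm : m ∈ N := hN.mulConj_mem z hn
  have hzn : z * n = m * z := by rw [hm_def]; group
  have key : starOp (m * z) x = lambdaMap m (starOp z x) + starOp m x := by
    rw [star_eq (m * z) x, star_eq z x, star_eq m x, lam_mul, lam_add, lam_neg]
    simp [add_assoc]
  rw [hzn, key]
  exact hN.add_mem (hN.lam_mem m h) (star_mem_left hN x hm)

lemma Qb_addCom (hN : IsIdeal N) {x z n : B} (h : addComB x z ∈ N) (hn : n ∈ N) :
    addComB x (z * n) ∈ N := by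
  set w := lambdaMap z n with hw_def
  have hw : w ∈ N := hN.lam_mem z hn
  have hzn : z * n = z + w := mul_eq_add_lam z n
  have key : addComB x (z + w)
      = ((x + z) + (w + (-x + -w + x)) + -(x + z)) + addComB x z := by
    simp [addComB, neg_add_rev, add_assoc]
  rw [hzn, key]
  have hk : w + (-x + -w + x) ∈ N := by
    have := hN.addConj_mem (-x) (hN.neg_mem hw)
    rw [neg_neg] at this
    exact hN.add_mem hw (by rwa [add_assoc] at this ⊢)
  exact hN.add_mem (hN.addConj_mem (x + z) hk) h

lemma addComB_swap (x z : B) : addComB z x = -(addComB x z) := by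
  simp [addComB, neg_add_rev, add_assoc]

lemma Qb_symm (hN : IsIdeal N) {x z : B} (h : Qb N x z) : Qb N z x :=
  ⟨h.2.1, h.1, by rw [addComB_swap]; exact hN.neg_mem h.2.2⟩

lemma Qb_right (hN : IsIdeal N) {x z n : B} (h : Qb N x z) (hn : n ∈ N) :
    Qb N x (z * n) :=
  ⟨Qb_star1 hN h.1 hn, Qb_star2 hN h.2.1 hn, Qb_addCom hN h.2.2 hn⟩

lemma Qb_left (hN : IsIdeal N) {x z n : B} (h : Qb N x z) (hn : n ∈ N) :
    Qb N (x * n) z := Qb_symm hN (Qb_right hN (Qb_symm hN h) hn)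

lemma Eb_to_Qb (hN : IsIdeal N) {x z : B} (h : Eb x z) : Qb N x z := by
  obtain ⟨h1, h2, h3⟩ := h
  exact ⟨h1 ▸ hN.zero_mem, h2 ▸ hN.zero_mem, h3 ▸ hN.zero_mem⟩

end Lemmas3
section Lemmas4

variable {B : Type*} [AddGroup B] [Group B] [SkewBrace B] {N : Set B}

/-- Choice of an element of a set (depends only on the set). -/
noncomputable def pick (S : Set B) : B :=
  @dite _ S.Nonempty (Classical.dec _) (fun h => h.some) (fun _ => 1)

lemma pick_mem {S : Set B} (h : S.Nonempty) : pick S ∈ S := by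
  unfold pick
  rw [dif_pos h]
  exact h.some_mem

/-- Representative of the centralizer of `x` in the coset of `b`. -/
noncomputable def sigF (N : Set B) (x b : B) : B := pick {w | Eb x w ∧ b⁻¹ * w ∈ N}

noncomputable def rF (N : Set B) (x b : B) : B := (sigF N x b)⁻¹ * b
noncomputable def tauF (N : Set B) (x b : B) : B := sigF N (rF N x b) x
noncomputable def pF (N : Set B) (x b : B) : B := (tauF N x b)⁻¹ * x

lemma sigF_spec (hN : IsIdeal N) {x b : B} (h : Eb x b) :
    Eb x (sigF N x b) ∧ b⁻¹ * sigF N x b ∈ N := by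
  have hne : Set.Nonempty {w | Eb x w ∧ b⁻¹ * w ∈ N} :=
    ⟨b, h, by rw [inv_mul_cancel]; exact hN.one_mem⟩
  exact pick_mem hne

lemma sigF_congr (hN : IsIdeal N) (x : B) {b b' : B} (h : b⁻¹ * b' ∈ N) :
    sigF N x b = sigF N x b' := by
  unfold sigF
  congr 1
  ext w
  simp only [Set.mem_setOf_eq, and_congr_right_iff]
  intro _
  constructor
  · intro hw
    have := hN.mul_mem (hN.inv_mem h) hw
    rwa [show (b⁻¹ * b')⁻¹ * (b⁻¹ * w) = b'⁻¹ * w by group] at this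
  · intro hw
    have := hN.mul_mem h hw
    rwa [show (b⁻¹ * b') * (b'⁻¹ * w) = b⁻¹ * w by group] at this

lemma constr (hN : IsIdeal N) {x b u v : B} (hE : Eb x b) (hu : u ∈ N) (hv : v ∈ N) :
    (pF N x b ∈ N ∧ rF N x b ∈ N ∧ Eb (pF N x b) (rF N x b)) ∧
      Qb N (tauF N x b * u) (sigF N x b * v) := by
  have hσ := sigF_spec hN hE
  have hr_mem : rF N x b ∈ N := by
    have := hN.inv_mem hσ.2
    rw [mul_inv_rev, inv_inv] at this
    exact this
  have hrE : Eb x (rF N x b) := Eb_mul (Eb_inv hσ.1) hE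
  have hrxE : Eb (rF N x b) x := Eb_symm hrE
  have hτ := sigF_spec hN hrxE
  have hp_mem : pF N x b ∈ N := by
    have := hN.inv_mem hτ.2
    rw [mul_inv_rev, inv_inv] at this
    exact this
  have hpE : Eb (rF N x b) (pF N x b) := Eb_mul (Eb_inv hτ.1) hrxE
  refine ⟨⟨hp_mem, hr_mem, Eb_symm hpE⟩, ?_⟩
  have hQxb : Qb N x b := Eb_to_Qb hN hE
  have h1 : b⁻¹ * sigF N x b * v ∈ N := hN.mul_mem hσ.2 hv
  have hQxz : Qb N x (sigF N x b * v) := by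
    have := Qb_right hN hQxb h1
    rwa [show b * (b⁻¹ * sigF N x b * v) = sigF N x b * v by group] at this
  have h2 : x⁻¹ * tauF N x b * u ∈ N := hN.mul_mem hτ.2 hu
  have := Qb_left hN hQxz h2
  rwa [show x * (x⁻¹ * tauF N x b * u) = tauF N x b * u by group] at this

lemma inj_aux (hN : IsIdeal N) {x b u v x' b' u' v' : B}
    (hE : Eb x b) (hE' : Eb x' b') (hu : u ∈ N) (hv : v ∈ N) (hu' : u' ∈ N) (hv' : v' ∈ N)
    (hp : pF N x b = pF N x' b') (hr : rF N x b = rF N x' b')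
    (hy : tauF N x b * u = tauF N x' b' * u') (hz : sigF N x b * v = sigF N x' b' * v') :
    x = x' ∧ b = b' ∧ u = u' ∧ v = v' := by
  have hσ := sigF_spec hN hE
  have hσ' := sigF_spec hN hE'
  have hrxE : Eb (rF N x b) x := Eb_symm (Eb_mul (Eb_inv hσ.1) hE)
  have hrxE' : Eb (rF N x' b') x' := Eb_symm (Eb_mul (Eb_inv hσ'.1) hE')
  have hτ := sigF_spec hN hrxE
  have hτ' := sigF_spec hN hrxE'
  -- τ = τ'
  have key1 : x⁻¹ * (tauF N x b * u) ∈ N := by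
    have := hN.mul_mem hτ.2 hu
    rwa [mul_assoc] at this
  have key1' : x'⁻¹ * (tauF N x' b' * u') ∈ N := by
    have := hN.mul_mem hτ'.2 hu'
    rwa [mul_assoc] at this
  have hτeq : tauF N x b = tauF N x' b' := by
    have e1 : tauF N x b = sigF N (rF N x b) (tauF N x b * u) :=
      sigF_congr hN _ key1
    have e2 : tauF N x' b' = sigF N (rF N x' b') (tauF N x' b' * u') :=
      sigF_congr hN _ key1'
    rw [e1, e2, hr, hy]
  have hx : x = x' := by
    have e1 : x = tauF N x b * pF N x b := by rw [pF]; group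
    have e2 : x' = tauF N x' b' * pF N x' b' := by rw [pF]; group
    rw [e1, e2, hτeq, hp]
  have hueq : u = u' := by
    have := congrArg (fun w => (tauF N x b)⁻¹ * w) hy
    simpa [hτeq, mul_assoc] using this
  have hσeq : sigF N x b = sigF N x' b' := by
    have key2 : b⁻¹ * (sigF N x b * v) ∈ N := by
      have := hN.mul_mem hσ.2 hv
      rwa [mul_assoc] at this
    have key2' : b'⁻¹ * (sigF N x' b' * v') ∈ N := by
      have := hN.mul_mem hσ'.2 hv'
      rwa [mul_assoc] at this
    have e1 : sigF N x b = sigF N x (sigF N x b * v) := sigF_congr hN _ key2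
    have e2 : sigF N x' b' = sigF N x' (sigF N x' b' * v') := sigF_congr hN _ key2'
    rw [e1, e2, hz, hx]
  have hb : b = b' := by
    have e1 : b = sigF N x b * rF N x b := by rw [rF]; group
    have e2 : b' = sigF N x' b' * rF N x' b' := by rw [rF]; group
    rw [e1, e2, hσeq, hr]
  have hveq : v = v' := by
    have := congrArg (fun w => (sigF N x b)⁻¹ * w) hz
    simpa [hσeq, mul_assoc] using this
  exact ⟨hx, hb, hueq, hveq⟩

end Lemmas4
section Final

variable {B : Type*} [AddGroup B] [Group B] [SkewBrace B] {N : Set B}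

lemma card_key [Finite B] (hN : IsIdeal N) :
    Nat.card {p : B × B //
        starOp p.1 p.2 = 0 ∧ starOp p.2 p.1 = 0 ∧ addComB p.1 p.2 = 0}
      * (Nat.card N * Nat.card N)
    ≤ Nat.card {p : B × B // p.1 ∈ N ∧ p.2 ∈ N ∧
        starOp p.1 p.2 = 0 ∧ starOp p.2 p.1 = 0 ∧ addComB p.1 p.2 = 0}
      * Nat.card {p : B × B //
        starOp p.1 p.2 ∈ N ∧ starOp p.2 p.1 ∈ N ∧ addComB p.1 p.2 ∈ N} := by
  classical
  rw [← Nat.card_prod, ← Nat.card_prod, ← Nat.card_prod]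
  apply Nat.card_le_card_of_injective
    (f := fun t : {p : B × B //
        starOp p.1 p.2 = 0 ∧ starOp p.2 p.1 = 0 ∧ addComB p.1 p.2 = 0} × (↥N × ↥N) =>
      (⟨(pF N t.1.1.1 t.1.1.2, rF N t.1.1.1 t.1.1.2),
        ⟨(constr hN (show Eb t.1.1.1 t.1.1.2 from t.1.2) t.2.1.2 t.2.2.2).1.1,
         (constr hN (show Eb t.1.1.1 t.1.1.2 from t.1.2) t.2.1.2 t.2.2.2).1.2.1,
         (constr hN (show Eb t.1.1.1 t.1.1.2 from t.1.2) t.2.1.2 t.2.2.2).1.2.2⟩⟩,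
       ⟨(tauF N t.1.1.1 t.1.1.2 * t.2.1.1, sigF N t.1.1.1 t.1.1.2 * t.2.2.1),
        (constr hN (show Eb t.1.1.1 t.1.1.2 from t.1.2) t.2.1.2 t.2.2.2).2⟩))
  rintro ⟨⟨⟨x, b⟩, hE⟩, ⟨u, hu⟩, ⟨v, hv⟩⟩ ⟨⟨⟨x', b'⟩, hE'⟩, ⟨u', hu'⟩, ⟨v', hv'⟩⟩ h
  simp only [Prod.mk.injEq, Subtype.mk.injEq, Subtype.ext_iff] at h
  obtain ⟨⟨hp, hr⟩, hy, hz⟩ := h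
  obtain ⟨hx, hb, hueq, hveq⟩ :=
    inj_aux hN (show Eb x b from hE) (show Eb x' b' from hE') hu hv hu' hv' hp hr hy hz
  simp [hx, hb, hueq, hveq]

end Final

/-- For an ideal `N` of a finite skew brace `B`,
`Pb(B) ≤ Pb(N)·Pb(B/N)`; in particular `Pb(B) ≤ Pb(B/N)` and `Pb(B) ≤ Pb(N)`. -/
theorem stmt14 {B : Type*} [AddGroup B] [Group B] [SkewBrace B] [Finite B]
    (N : Set B) (hN : IsIdeal N) :
    Pb B ≤ PbSub N * PbQuot B N ∧ Pb B ≤ PbQuot B N ∧ Pb B ≤ PbSub N := by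
  classical
  have key := card_key hN
  have hm : 0 < Nat.card B := Nat.card_pos
  have hnN : Nonempty ↥N := ⟨⟨0, hN.zero_mem⟩⟩
  have hn : 0 < Nat.card ↥N := Nat.card_pos
  have hcq : Nat.card {p : B × B //
      starOp p.1 p.2 ∈ N ∧ starOp p.2 p.1 ∈ N ∧ addComB p.1 p.2 ∈ N}
      ≤ Nat.card B * Nat.card B := by
    rw [← Nat.card_prod]
    exact Nat.card_le_card_of_injective _ Subtype.val_injective
  have hce : Nat.card {p : B × B //
        starOp p.1 p.2 = 0 ∧ starOp p.2 p.1 = 0 ∧ addComB p.1 p.2 = 0}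
      ≤ Nat.card {p : B × B //
        starOp p.1 p.2 ∈ N ∧ starOp p.2 p.1 ∈ N ∧ addComB p.1 p.2 ∈ N} := by
    apply Nat.card_le_card_of_injective
      (f := fun t => ⟨t.1, Eb_to_Qb hN (show Eb t.1.1 t.1.2 from t.2)⟩)
    intro t1 t2 h
    simp only [Subtype.mk.injEq] at h
    have h' := congrArg Subtype.val h
    exact Subtype.ext h'
  have hmq : (0 : ℚ) < (Nat.card B : ℚ) ^ 2 := by
    have : (0 : ℚ) < (Nat.card B : ℚ) := by exact_mod_cast hm
    positivity
  have hnq : (0 : ℚ) < (Nat.card ↥N : ℚ) ^ 2 := by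
    have : (0 : ℚ) < (Nat.card ↥N : ℚ) := by exact_mod_cast hn
    positivity
  have h1 : Pb B ≤ PbSub N * PbQuot B N := by
    rw [Pb, PbSub, PbQuot, div_mul_div_comm, div_le_div_iff₀ hmq (by positivity)]
    have keyq : ((Nat.card {p : B × B //
        starOp p.1 p.2 = 0 ∧ starOp p.2 p.1 = 0 ∧ addComB p.1 p.2 = 0} : ℚ))
        * ((Nat.card ↥N : ℚ) * (Nat.card ↥N : ℚ))
        ≤ (Nat.card {p : B × B // p.1 ∈ N ∧ p.2 ∈ N ∧
        starOp p.1 p.2 = 0 ∧ starOp p.2 p.1 = 0 ∧ addComB p.1 p.2 = 0} : ℚ)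
        * (Nat.card {p : B × B //
        starOp p.1 p.2 ∈ N ∧ starOp p.2 p.1 ∈ N ∧ addComB p.1 p.2 ∈ N} : ℚ) := by
      exact_mod_cast key
    nlinarith [hmq, hnq, sq_nonneg ((Nat.card B : ℚ))]
  refine ⟨h1, ?_, ?_⟩
  · rw [Pb, PbQuot]
    gcongr
  · have hq1 : PbQuot B N ≤ 1 := by
      rw [PbQuot, div_le_one hmq]
      have : ((Nat.card {p : B × B //
          starOp p.1 p.2 ∈ N ∧ starOp p.2 p.1 ∈ N ∧ addComB p.1 p.2 ∈ N} : ℚ))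
          ≤ (Nat.card B : ℚ) * (Nat.card B : ℚ) := by exact_mod_cast hcq
      calc _ ≤ (Nat.card B : ℚ) * (Nat.card B : ℚ) := this
        _ = _ := (sq (Nat.card B : ℚ)).symm
    have hs0 : 0 ≤ PbSub N := by
      rw [PbSub]
      positivity
    calc Pb B ≤ PbSub N * PbQuot B N := h1
      _ ≤ PbSub N * 1 := mul_le_mul_of_nonneg_left hq1 hs0
      _ = PbSub N := mul_one _
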